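/- If there exists w ∈ W^P with ℓ(w) = n such that w^{-1} ⋅ (d × μ) is dominant, then 1 − |μ_n| ≤ n + d ≤ |μ_n| − 1. (This is the implication (3) ⇒ (2) of the combinatorial lemma.) -/

import Mathlib

/-- The Weyl group of type `D_N`: pairs `(σ, ε)` of a permutation of `{1, …, N}` and a
sign vector `ε : {1, …, N} → {±1}` with `∏ i, ε i = 1`. -/
def WeylD (N : ℕ) : Type :=
  {w : Equiv.Perm (Fin N) × (Fin N → ℤ) // (∀ i, w.2 i = 1 ∨ w.2 i = -1) ∧ ∏ i, w.2 i = 1}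

namespace WeylD

/-- The `ℤ`-linear action of `w = (σ, ε)` on `ℤ^N`: `(w · λ)_i = ε_i · λ_{σ⁻¹ i}`. -/
def act {N : ℕ} (w : WeylD N) (lam : Fin N → ℤ) : Fin N → ℤ :=
  fun i => w.1.2 i * lam (w.1.1⁻¹ i)

/-- The inverse of a Weyl group element: `(σ, ε)⁻¹ = (σ⁻¹, ε ∘ σ)`. -/
def inv {N : ℕ} (w : WeylD N) : WeylD N :=
  ⟨(w.1.1⁻¹, fun i => w.1.2 (w.1.1 i)), by
    obtain ⟨h1, h2⟩ := w.2
    exact ⟨fun i => h1 _, by rw [Equiv.prod_comp w.1.1 w.1.2]; exact h2⟩⟩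

end WeylD

/-- The positive roots of the root system of type `D_N`:
`{e_i - e_j : i < j} ∪ {e_i + e_j : i < j}`. -/
def PosRootsD (N : ℕ) : Set (Fin N → ℤ) :=
  {α | ∃ i j : Fin N, i < j ∧
    (α = Pi.single i 1 - Pi.single j 1 ∨ α = Pi.single i 1 + Pi.single j 1)}

/-- The length of `w`: the number of positive roots `α` with `w(α) ∈ -Φ⁺`. -/
noncomputable def WeylD.length {N : ℕ} (w : WeylD N) : ℕ :=
  Set.ncard {α | α ∈ PosRootsD N ∧ -(w.act α) ∈ PosRootsD N}

/-- The half sum of positive roots `ρ = (N-1, N-2, …, 1, 0)` of type `D_N`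
(for `N = n+1` this is `(n, n-1, …, 1, 0)`). -/
def rhoD (N : ℕ) : Fin N → ℤ := fun i => (N : ℤ) - 1 - (i : ℕ)

/-- The dot action `w ⋅ λ = w(λ + ρ) - ρ`. -/
def WeylD.dot {N : ℕ} (w : WeylD N) (lam : Fin N → ℤ) : Fin N → ℤ :=
  w.act (lam + rhoD N) - rhoD N

/-- `λ ∈ ℤ^{n+1}` is dominant if `λ_1 ≥ λ_2 ≥ … ≥ λ_n ≥ |λ_{n+1}|`. -/
def DominantD (n : ℕ) (lam : Fin (n + 1) → ℤ) : Prop :=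
  (∀ i j : Fin (n + 1), i ≤ j → (j : ℕ) < n → lam j ≤ lam i) ∧
  (∀ i : Fin (n + 1), (i : ℕ) < n → |lam (Fin.last n)| ≤ lam i)

/-- The set of Kostant representatives `W^P` for the maximal parabolic `P` of
`SO(n+1,n+1)` obtained by deleting the first simple root: those `w` such that
`w⁻¹(α) ∈ Φ⁺` for every positive root `α` supported on the coordinates `{2, …, n+1}`
(i.e. with vanishing first coordinate). -/
def KostantWP (n : ℕ) : Set (WeylD (n + 1)) :=
  {w | ∀ α ∈ PosRootsD (n + 1), α 0 = 0 → w.inv.act α ∈ PosRootsD (n + 1)}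

/-!
Write `w = (σ, ε)`, so that `w⁻¹ e_i = ε_i e_{σ⁻¹ i}` (coordinates `0, …, n`). Applying the
Kostant condition to the roots `e_i ∓ e_j` with `0 < i < j` shows that `ε_i = 1` for `0 < i < n`
and that `σ⁻¹` is increasing on `1, …, n`; then `∏ ε = 1` forces `ε_0 = ε_n`. If these two signs
are `1`, the only inversions of `w` are the roots `e_a - e_k` with `a < k := σ⁻¹ 0`, so
`ℓ(w) ≤ k`; if they are `-1`, then `ℓ(w) > n` unless `k = n`. Hence `ℓ(w) = n` gives `k = n`.
Then the last coordinate of `w⁻¹(d × μ + ρ)` is `±(n + d)`, while `±μ_n` sits in a coordinate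
`m < n`, where `ρ_m ≥ 1`; for `λ := w⁻¹ ⋅ (d × μ)`, dominance `|λ_n| ≤ λ_m` reads
`|n + d| ≤ ±μ_n - ρ_m ≤ |μ_n| - 1`.
-/

namespace PosRootsD

variable {N : ℕ} {α : Fin N → ℤ} {a b : Fin N}

theorem finite : (PosRootsD N).Finite :=
  (Set.finite_range fun p : Fin N × Fin N × Bool =>
    (Pi.single p.1 1 + Pi.single p.2.1 (if p.2.2 then 1 else -1) : Fin N → ℤ)).subset <| by
    rintro α ⟨i, j, -, rfl | rfl⟩
    · exact ⟨(i, j, false), by simp [sub_eq_add_neg, Pi.single_neg]⟩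
    · exact ⟨(i, j, true), by simp⟩

theorem single_add_single_mem_of_lt {ε : ℤ} (hab : a < b) (hε : ε = 1 ∨ ε = -1) :
    (Pi.single a 1 + Pi.single b ε : Fin N → ℤ) ∈ PosRootsD N := by
  rcases hε with rfl | rfl
  · exact ⟨a, b, hab, Or.inr rfl⟩
  · exact ⟨a, b, hab, Or.inl (by rw [Pi.single_neg, sub_eq_add_neg])⟩

theorem single_sub_single_mem (hab : a < b) :
    (Pi.single a 1 - Pi.single b 1 : Fin N → ℤ) ∈ PosRootsD N :=
  ⟨a, b, hab, Or.inl rfl⟩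

theorem single_add_single_mem_of_ne (hab : a ≠ b) :
    (Pi.single a 1 + Pi.single b 1 : Fin N → ℤ) ∈ PosRootsD N := by
  rcases hab.lt_or_gt with h | h
  · exact ⟨a, b, h, Or.inr rfl⟩
  · exact ⟨b, a, h, Or.inr (add_comm _ _)⟩

theorem exists_pos (hα : α ∈ PosRootsD N) : ∃ a, 0 < α a := by
  obtain ⟨i, j, hij, rfl | rfl⟩ := hα <;> exact ⟨i, by simp [hij.ne]⟩

theorem exists_lt_pos_of_neg (hα : α ∈ PosRootsD N) (hb : α b < 0) : ∃ a < b, 0 < α a := by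
  obtain ⟨i, j, hij, rfl | rfl⟩ := hα
  · refine ⟨i, ?_, by simp [hij.ne]⟩
    obtain rfl : b = j := by
      by_contra hbj
      simp only [Pi.sub_apply, Pi.single_apply, hbj, if_false, sub_zero] at hb
      split_ifs at hb <;> omega
    exact hij
  · simp only [Pi.add_apply, Pi.single_apply] at hb
    split_ifs at hb <;> omega

theorem neg_single_sub_single_not_mem (a b : Fin N) :
    (-Pi.single a 1 - Pi.single b 1 : Fin N → ℤ) ∉ PosRootsD N := fun h => by
  obtain ⟨c, hc⟩ := exists_pos h
  simp only [Pi.sub_apply, Pi.neg_apply, Pi.single_apply] at hc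
  split_ifs at hc <;> omega

theorem lt_of_single_sub_single_mem
    (h : (Pi.single a 1 - Pi.single b 1 : Fin N → ℤ) ∈ PosRootsD N) : a < b := by
  obtain rfl | hab := eq_or_ne a b
  · obtain ⟨c, hc⟩ := exists_pos h
    simp at hc
  obtain ⟨c, hcb, hc⟩ := exists_lt_pos_of_neg h (b := b) (by simp [hab])
  obtain rfl : c = a := by
    by_contra hca
    simp [hca, hcb.ne] at hc
  exact hcb

end PosRootsD

namespace WeylD

variable {N : ℕ} (w : WeylD N)

theorem sign_eq_one_or_eq_neg_one (i : Fin N) : w.1.2 i = 1 ∨ w.1.2 i = -1 := w.2.1 i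

theorem sign_mul_self (i : Fin N) : w.1.2 i * w.1.2 i = 1 := by
  rcases w.sign_eq_one_or_eq_neg_one i with h | h <;> simp [h]

theorem abs_sign (i : Fin N) : |w.1.2 i| = 1 := by
  rcases w.sign_eq_one_or_eq_neg_one i with h | h <;> simp [h]

theorem sign_mul_le_abs (i : Fin N) (x : ℤ) : w.1.2 i * x ≤ |x| := by
  rcases w.sign_eq_one_or_eq_neg_one i with h | h <;> simp [h, le_abs_self, neg_le_abs]

theorem act_add (x y : Fin N → ℤ) : w.act (x + y) = w.act x + w.act y := by
  funext i; simp [act, mul_add]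

theorem act_sub (x y : Fin N → ℤ) : w.act (x - y) = w.act x - w.act y := by
  funext i; simp [act, mul_sub]

theorem act_single (a : Fin N) (c : ℤ) :
    w.act (Pi.single a c) = Pi.single (w.1.1 a) (w.1.2 (w.1.1 a) * c) := by
  funext i
  rcases eq_or_ne i (w.1.1 a) with rfl | h
  · simp [act]
  · simp [act, h, Equiv.symm_apply_eq]

theorem inv_act_apply (x : Fin N → ℤ) (i : Fin N) :
    w.inv.act x i = w.1.2 (w.1.1 i) * x (w.1.1 i) := by
  simp [act, inv]

theorem inv_act_single (a : Fin N) (c : ℤ) :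
    w.inv.act (Pi.single a c) = Pi.single (w.1.1⁻¹ a) (w.1.2 a * c) := by
  rw [act_single]
  simp [inv]

theorem inv_dot_apply (x : Fin N → ℤ) (i : Fin N) :
    w.inv.dot x i = w.1.2 (w.1.1 i) * (x (w.1.1 i) + rhoD N (w.1.1 i)) - rhoD N i := by
  simp [dot, inv_act_apply]

theorem le_length {s : Set (Fin N → ℤ)}
    (hs : s ⊆ {α | α ∈ PosRootsD N ∧ -(w.act α) ∈ PosRootsD N}) : s.ncard ≤ w.length :=
  Set.ncard_le_ncard hs (PosRootsD.finite.subset fun _ hα => hα.1)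

theorem length_le {s : Set (Fin N → ℤ)} (hs : s.Finite)
    (hsub : {α | α ∈ PosRootsD N ∧ -(w.act α) ∈ PosRootsD N} ⊆ s) : w.length ≤ s.ncard :=
  Set.ncard_le_ncard hsub hs

end WeylD

theorem WeylD.lt_length_of_sign_zero_eq_neg_one {n : ℕ} {w : WeylD (n + 1)} (h : w.1.2 0 = -1)
    (hk : w.1.1⁻¹ 0 ≠ Fin.last n) : n < w.length := by
  set k := w.1.1⁻¹ 0
  -- As `w e_k = -e_0`, the `n + 1` positive roots `e_k + e_b` (`b ≠ k`) and `e_k - e_n` are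
  -- all inversions.
  have hwk : w.act (Pi.single k 1) = Pi.single 0 (-1) := by
    rw [w.act_single]
    simp [k, h]
  have hσ : ∀ b ≠ k, 0 < w.1.1 b := fun b hb =>
    Fin.pos_of_ne_zero fun h0 => hb (Equiv.Perm.eq_inv_iff_eq.mpr h0)
  have hinv : ∀ b ≠ k, ∀ c : ℤ, (c = 1 ∨ c = -1) →
      -(w.act (Pi.single k 1 + Pi.single b c)) ∈ PosRootsD (n + 1) := by
    intro b hb c hc
    rw [w.act_add, hwk, w.act_single, neg_add, ← Pi.single_neg, ← Pi.single_neg, neg_neg]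
    refine PosRootsD.single_add_single_mem_of_lt (hσ b hb) ?_
    rcases w.sign_eq_one_or_eq_neg_one (w.1.1 b) with h' | h' <;> rcases hc with rfl | rfl <;>
      simp [h']
  let s : Finset (Fin (n + 1) → ℤ) := insert (Pi.single k 1 + Pi.single (Fin.last n) (-1))
    ((Finset.univ.erase k).image fun b => Pi.single k 1 + Pi.single b 1)
  have hs : s.card = n + 1 := by
    rw [Finset.card_insert_of_notMem, Finset.card_image_of_injective, Finset.card_erase_of_mem
      (Finset.mem_univ k), Finset.card_univ, Fintype.card_fin, Nat.add_sub_cancel]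
    · intro a b hab
      simpa [Pi.single_apply] using congrFun hab a
    · simp only [Finset.mem_image, Finset.mem_erase, Finset.mem_univ, and_true, not_exists,
        not_and]
      intro b _ hb
      have := congrFun hb (Fin.last n)
      simp only [Pi.add_apply, Pi.single_apply] at this
      split_ifs at this <;> omega
  suffices (s : Set (Fin (n + 1) → ℤ)) ⊆
      {α | α ∈ PosRootsD (n + 1) ∧ -(w.act α) ∈ PosRootsD (n + 1)} by
    have := w.le_length this
    rw [Set.ncard_coe_finset, hs] at this
    omega
  intro α hα
  simp only [s, Finset.coe_insert, Finset.coe_image, Set.mem_insert_iff, Set.mem_image,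
    Finset.mem_coe, Finset.mem_erase, Finset.mem_univ, and_true] at hα
  rcases hα with rfl | ⟨b, hb, rfl⟩
  · refine ⟨?_, hinv _ (Ne.symm hk) _ (Or.inr rfl)⟩
    rw [Pi.single_neg, ← sub_eq_add_neg]
    exact PosRootsD.single_sub_single_mem (lt_of_le_of_ne (Fin.le_last k) hk)
  · exact ⟨PosRootsD.single_add_single_mem_of_ne (Ne.symm hb), hinv b hb 1 (Or.inl rfl)⟩

namespace KostantWP

variable {n : ℕ} {w : WeylD (n + 1)}

theorem single_sign_sub_single_mem (hw : w ∈ KostantWP n) {i j : Fin (n + 1)} (hi : 0 < i)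
    (hij : i < j) :
    (Pi.single (w.1.1⁻¹ i) (w.1.2 i) - Pi.single (w.1.1⁻¹ j) 1 : Fin (n + 1) → ℤ) ∈
      PosRootsD (n + 1) := by
  have hα : (Pi.single i 1 + Pi.single j (-w.1.2 j) : Fin (n + 1) → ℤ) ∈ PosRootsD (n + 1) :=
    PosRootsD.single_add_single_mem_of_lt hij <| by
      rcases w.sign_eq_one_or_eq_neg_one j with h | h <;> simp [h]
  have h0 : (Pi.single i 1 + Pi.single j (-w.1.2 j) : Fin (n + 1) → ℤ) 0 = 0 := by
    simp [hi.ne', (hi.trans hij).ne']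
  have := hw _ hα h0
  rwa [WeylD.act_add, WeylD.inv_act_single, WeylD.inv_act_single, mul_one, mul_neg,
    w.sign_mul_self, Pi.single_neg, ← sub_eq_add_neg] at this

theorem sign_eq_one (hw : w ∈ KostantWP n) {i : Fin (n + 1)} (hi : 0 < i)
    (hin : i < Fin.last n) : w.1.2 i = 1 := by
  have := single_sign_sub_single_mem hw hi hin
  rcases w.sign_eq_one_or_eq_neg_one i with h | h
  · exact h
  · rw [h, Pi.single_neg] at this
    exact absurd this (PosRootsD.neg_single_sub_single_not_mem _ _)

theorem perm_inv_lt (hw : w ∈ KostantWP n) {i j : Fin (n + 1)} (hi : 0 < i) (hij : i < j) :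
    w.1.1⁻¹ i < w.1.1⁻¹ j := by
  have := single_sign_sub_single_mem hw hi hij
  rw [sign_eq_one hw hi (hij.trans_le (Fin.le_last j))] at this
  exact PosRootsD.lt_of_single_sub_single_mem this

theorem sign_last (hw : w ∈ KostantWP n) : w.1.2 (Fin.last n) = w.1.2 0 := by
  rcases eq_or_ne (0 : Fin (n + 1)) (Fin.last n) with h0 | h0
  · rw [h0]
  have hprod := w.2.2
  rw [Fintype.prod_eq_mul 0 (Fin.last n) h0 fun x hx =>
    sign_eq_one hw (Fin.pos_of_ne_zero hx.1) (lt_of_le_of_ne (Fin.le_last x) hx.2)] at hprod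
  linear_combination w.1.2 0 * hprod - w.1.2 (Fin.last n) * w.sign_mul_self 0

theorem sign_eq_one_of_sign_zero (hw : w ∈ KostantWP n) (h : w.1.2 0 = 1) (i : Fin (n + 1)) :
    w.1.2 i = 1 := by
  rcases eq_or_ne i 0 with rfl | hi0
  · exact h
  rcases eq_or_ne i (Fin.last n) with rfl | hil
  · rw [sign_last hw, h]
  exact sign_eq_one hw (Fin.pos_of_ne_zero hi0) (lt_of_le_of_ne (Fin.le_last i) hil)

theorem length_le_of_sign_zero_eq_one (hw : w ∈ KostantWP n) (h : w.1.2 0 = 1) :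
    w.length ≤ w.1.1⁻¹ 0 := by
  set k := w.1.1⁻¹ 0
  have hact : ∀ a, w.act (Pi.single a 1) = Pi.single (w.1.1 a) 1 := by
    simp [WeylD.act_single, sign_eq_one_of_sign_zero hw h]
  calc w.length
      ≤ (((Finset.Iio k).image fun a => (Pi.single a 1 - Pi.single k 1 : Fin (n + 1) → ℤ) :
          Finset _) : Set (Fin (n + 1) → ℤ)).ncard := w.length_le (Finset.finite_toSet _) ?_
    _ ≤ (Finset.Iio k).card := by rw [Set.ncard_coe_finset]; exact Finset.card_image_le
    _ = k := Fin.card_Iio k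
  rintro α ⟨⟨i, j, hij, rfl | rfl⟩, hneg⟩
  · rw [WeylD.act_sub, hact, hact, neg_sub] at hneg
    have hj : w.1.1 j = 0 := by
      by_contra hj
      have := perm_inv_lt hw (Fin.pos_of_ne_zero hj) (PosRootsD.lt_of_single_sub_single_mem hneg)
      simp only [Equiv.Perm.coe_inv, Equiv.symm_apply_apply] at this
      exact this.asymm hij
    obtain rfl : j = k := Equiv.Perm.eq_inv_iff_eq.mpr hj
    simp only [Finset.coe_image, Finset.coe_Iio, Set.mem_image, Set.mem_Iio]
    exact ⟨i, hij, rfl⟩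
  · rw [WeylD.act_add, hact, hact, neg_add, ← sub_eq_add_neg] at hneg
    exact absurd hneg (PosRootsD.neg_single_sub_single_not_mem _ _)

theorem perm_inv_zero_eq_last (hw : w ∈ KostantWP n) (hlen : w.length = n) :
    w.1.1⁻¹ 0 = Fin.last n := by
  by_contra hk
  rcases w.sign_eq_one_or_eq_neg_one 0 with h | h
  · have := length_le_of_sign_zero_eq_one hw h
    have := Fin.val_lt_last hk
    omega
  · have := WeylD.lt_length_of_sign_zero_eq_neg_one h hk
    omega

end KostantWP

/-- Implication (3) ⇒ (2) of the combinatorial lemma: if some Kostant representative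
`w ∈ W^P` of length `n = dim(N_P)/2` makes `w⁻¹ ⋅ (d × μ)` dominant, then
`1 - |μ_n| ≤ n + d ≤ |μ_n| - 1`. -/
theorem kostant_implies_range (n : ℕ) (hn : 2 ≤ n)
    (μ : Fin n → ℤ)
    (d : ℤ)
    (hw : ∃ w : WeylD (n + 1), w ∈ KostantWP n ∧ w.length = n ∧
      DominantD n (w.inv.dot (Fin.cons d μ))) :
    1 - |μ ⟨n - 1, by omega⟩| ≤ (n : ℤ) + d ∧
      (n : ℤ) + d ≤ |μ ⟨n - 1, by omega⟩| - 1 := by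
  obtain ⟨w, hwP, hlen, -, hdom⟩ := hw
  have hk := KostantWP.perm_inv_zero_eq_last hwP hlen
  set m := w.1.1⁻¹ (Fin.last n)
  have hm : (m : ℕ) < n := Fin.val_lt_last fun h =>
    absurd (w.1.1⁻¹.injective (h.trans hk.symm)) (by simp [Fin.ext_iff]; omega)
  have hσm : w.1.1 m = Fin.last n := Equiv.Perm.eq_inv_iff_eq.mp rfl
  have hσlast : w.1.1 (Fin.last n) = 0 := Equiv.Perm.eq_inv_iff_eq.mp hk.symm
  have hcons : (Fin.cons d μ : Fin (n + 1) → ℤ) (Fin.last n) = μ ⟨n - 1, by omega⟩ := by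
    rw [show Fin.last n = (⟨n - 1, by omega⟩ : Fin n).succ from Fin.ext (by simp; omega),
      Fin.cons_succ]
  have hbound := hdom m hm
  rw [WeylD.inv_dot_apply, WeylD.inv_dot_apply, hσm, hσlast, hcons] at hbound
  simp only [Fin.cons_zero, rhoD, Nat.cast_add, Nat.cast_one, add_sub_cancel_right,
    Fin.coe_ofNat_eq_mod, Nat.zero_mod, CharP.cast_eq_zero, sub_zero, Fin.val_last, sub_self,
    abs_mul, add_zero, w.abs_sign, one_mul] at hbound
  have hρ : (1 : ℤ) ≤ n - m := by omega
  have habs : |d + n| ≤ |μ ⟨n - 1, by omega⟩| - 1 := by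
    linarith [w.sign_mul_le_abs (Fin.last n) (μ ⟨n - 1, by omega⟩)]
  constructor <;> linarith [abs_le.mp habs]
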